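/- The map Flip: MS_n → MS_n, which sends each segment [a,b] to [n+1-b, n+1-a], is an involution on multisegments which intertwines the crystal operators: Flip(f_i(M)) = f*_{n+1-i}(Flip(M)) and Flip(e_i(M)) = e*_{n+1-i}(Flip(M)) for all M and all i. -/

import Mathlib

/-- A segment `[a,b]` is a pair of integers. -/
abbrev Seg : Type := ℕ × ℕ

/-- A multisegment is a finite multiset of segments. -/
abbrev MS : Type := Multiset Seg

/-- `M ∈ MS_n`: all segments `[a,b]` satisfy `1 ≤ a ≤ b ≤ n`. -/
def IsMS (n : ℕ) (M : MS) : Prop := ∀ s ∈ M, 1 ≤ s.1 ∧ s.1 ≤ s.2 ∧ s.2 ≤ n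

/-- A bracket: `op` = "(", `cl` = ")". -/
inductive Br | op | cl
deriving DecidableEq

/-- One step of the left-to-right bracket cancellation procedure.  The state
`(cls, ops)` records the tags of the currently uncanceled ")" (in order) and the
currently uncanceled "(" (in order).  A new "(" is appended to `ops`; a new ")"
cancels the last uncanceled "(" if there is one, and otherwise is appended to `cls`. -/
def step {τ : Type} : (List τ × List τ) → (Br × τ) → (List τ × List τ)
  | (cls, ops), (Br.op, s) => (cls, ops ++ [s])
  | (cls, ops), (Br.cl, s) => if ops.isEmpty then (cls ++ [s], ops) else (cls, ops.dropLast)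

/-- Process a tagged bracket string; the result `(cls, ops)` lists the tags of the
uncanceled ")" and the uncanceled "(" (left to right).  The reduced (uncanceled)
string is `")"^cls.length ++ "("^ops.length`. -/
def scan {τ : Type} (l : List (Br × τ)) : List τ × List τ := l.foldl step ([], [])

/-- Number of uncanceled ")" in a tagged bracket string. -/
def urStr {τ : Type} (l : List (Br × τ)) : ℕ := (scan l).1.length

/-- Number of uncanceled "(" in a tagged bracket string. -/
def epsStr {τ : Type} (l : List (Br × τ)) : ℕ := (scan l).2.length

/-- Tag of the rightmost uncanceled ")", if any. -/
def lastCl {τ : Type} (l : List (Br × τ)) : Option τ := (scan l).1.getLast?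

/-- Tag of the leftmost uncanceled "(", if any. -/
def headOp {τ : Type} (l : List (Br × τ)) : Option τ := (scan l).2.head?

/-- The string `S_i(M)`: segments are ordered by increasing height, then by
decreasing lower endpoint; each `[h,i]` contributes "(" and each `[h,i-1]`
contributes ")".  In the block of segments of height `t` the "(" over the
`[i-t+1, i]` segments come immediately before the ")" over the `[i-t, i-1]`
segments, and blocks appear for `t = 1, 2, …`. -/
def Si (M : MS) (i : ℕ) : List (Br × Seg) :=
  (List.range i).flatMap fun t0 =>
    let t := t0 + 1
    List.replicate (M.count (i - t + 1, i)) (Br.op, ((i - t + 1 : ℕ), i)) ++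
    List.replicate (M.count (i - t, i - 1)) (Br.cl, ((i - t : ℕ), i - 1))

/-- The string `S_i^*(M)`: segments ordered by increasing height, then by
increasing lower endpoint; each `[i,j]` contributes "(" and each `[i+1,j]`
contributes ")".  In the block of height `t` the "(" below the `[i, i+t-1]`
segments come immediately before the ")" below the `[i+1, i+t]` segments. -/
def SiStar (n : ℕ) (M : MS) (i : ℕ) : List (Br × Seg) :=
  (List.range n).flatMap fun t0 =>
    let t := t0 + 1
    List.replicate (M.count (i, i + t - 1)) (Br.op, (i, i + t - 1)) ++
    List.replicate (M.count (i + 1, i + t)) (Br.cl, (i + 1, i + t))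

/-- The crystal operator `f_i` on multisegments: it changes the segment `[h,i-1]`
under the rightmost uncanceled ")" of `S_i(M)` into `[h,i]`, or adds a new
segment `[i,i]` if there is no uncanceled ")". -/
def fM (i : ℕ) (M : MS) : MS :=
  match lastCl (Si M i) with
  | some s => M.erase s + {(s.1, i)}
  | none => M + {(i, i)}

/-- The crystal operator `e_i` on multisegments: it changes the segment `[h,i]`
under the leftmost uncanceled "(" of `S_i(M)` into `[h,i-1]` (deleting it when
`h = i`), or returns `none` (i.e. `0`) if there is no uncanceled "(". -/
def eM (i : ℕ) (M : MS) : Option MS :=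
  match headOp (Si M i) with
  | some s => some (if s.1 = i then M.erase s else M.erase s + {(s.1, i - 1)})
  | none => none

/-- The operator `f_i^*`: it changes the segment `[i+1,j]` under the rightmost
uncanceled ")" of `S_i^*(M)` into `[i,j]`, or adds `[i,i]` if there is none. -/
def fMStar (n i : ℕ) (M : MS) : MS :=
  match lastCl (SiStar n M i) with
  | some s => M.erase s + {(i, s.2)}
  | none => M + {(i, i)}

/-- The operator `e_i^*`: it changes the segment `[i,j]` under the leftmost
uncanceled "(" of `S_i^*(M)` into `[i+1,j]` (deleting it when `j = i`), or
returns `none` if there is no uncanceled "(". -/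
def eMStar (n i : ℕ) (M : MS) : Option MS :=
  match headOp (SiStar n M i) with
  | some s => some (if s.2 = i then M.erase s else M.erase s + {(i + 1, s.2)})
  | none => none

/-- The number of boxes labeled `j` in `M`: each segment `[a,b]` contains one
box labeled `j` for each `a ≤ j ≤ b`. -/
def boxes (M : MS) (j : ℕ) : ℕ :=
  (M.filter (fun s => s.1 ≤ j ∧ j ≤ s.2)).card

/-- The pairing `⟨wt(M), α_i^∨⟩ = #(boxes i-1) + #(boxes i+1) - 2 #(boxes i)`. -/
def wtPair (M : MS) (i : ℕ) : ℤ :=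
  (boxes M (i - 1) : ℤ) + (boxes M (i + 1) : ℤ) - 2 * (boxes M i : ℤ)


/-- The map `Flip : MS_n → MS_n` sending each segment `[a,b]` to `[n+1-b, n+1-a]`. -/
def flipMS (n : ℕ) (M : MS) : MS := M.map (fun s => (n + 1 - s.2, n + 1 - s.1))

/-!
Flip sends a segment `[h, i]` of height `t` to `[n+1-i, n-i+t]` and `[h, i-1]` of height `t` to
`[n+2-i, n+1-i+t]`, again of height `t`.  Hence it carries the bracket string `S_i(M)` letter by
letter onto `S*_{n+1-i}(Flip M)` (the blocks of height `t > i` of the latter being empty), and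
since bracket cancellation only looks at the brackets, not at their tags, the uncanceled brackets
and thus the segments changed by `f_i, e_i` and by `f*_{n+1-i}, e*_{n+1-i}` correspond under Flip.
-/

section Brackets

variable {τ τ' : Type}

lemma step_map (f : τ → τ') (st : List τ × List τ) (p : Br × τ) :
    step (Prod.map (List.map f) (List.map f) st) (Prod.map id f p)
      = Prod.map (List.map f) (List.map f) (step st p) := by
  obtain ⟨cls, ops⟩ := st
  obtain ⟨_ | _, s⟩ := p
  · simp [step]
  · by_cases h : ops.isEmpty <;> simp [step, h, List.map_dropLast]

lemma scan_map (f : τ → τ') (l : List (Br × τ)) :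
    scan (l.map (Prod.map id f)) = Prod.map (List.map f) (List.map f) (scan l) := by
  rw [scan, List.foldl_map]
  exact List.foldl_hom (Prod.map (List.map f) (List.map f)) (l := l) (init := ([], []))
    fun st p => step_map f st p

lemma lastCl_map (f : τ → τ') (l : List (Br × τ)) :
    lastCl (l.map (Prod.map id f)) = (lastCl l).map f := by
  simp only [lastCl, scan_map, Prod.map_fst, List.getLast?_map]

lemma headOp_map (f : τ → τ') (l : List (Br × τ)) :
    headOp (l.map (Prod.map id f)) = (headOp l).map f := by
  simp only [headOp, scan_map, Prod.map_snd, List.head?_map]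

lemma step_subset (st : List τ × List τ) (p : Br × τ) :
    (step st p).1 ++ (step st p).2 ⊆ st.1 ++ st.2 ++ [p.2] := by
  obtain ⟨cls, ops⟩ := st
  obtain ⟨_ | _, s⟩ := p
  · simp [step]
  · by_cases h : ops.isEmpty
    · simp [step, h]
    · have := List.dropLast_subset ops
      simp only [step, h]
      grind

lemma foldl_step_subset (l : List (Br × τ)) (st : List τ × List τ) :
    (l.foldl step st).1 ++ (l.foldl step st).2 ⊆ st.1 ++ st.2 ++ l.map Prod.snd := by
  induction l generalizing st with
  | nil => simp
  | cons p l ih =>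
    have hstep := step_subset st p
    refine List.Subset.trans (ih (step st p)) fun x hx => ?_
    simp only [List.subset_def, List.mem_append, List.mem_singleton] at hstep
    simp only [List.map_cons, List.mem_append, List.mem_cons] at hx ⊢
    grind

lemma scan_subset (l : List (Br × τ)) : (scan l).1 ++ (scan l).2 ⊆ l.map Prod.snd := by
  simpa [scan] using foldl_step_subset l ([], [])

lemma mem_of_lastCl_eq_some {l : List (Br × τ)} {s : τ} (h : lastCl l = some s) :
    s ∈ l.map Prod.snd :=
  scan_subset l (List.mem_append_left _ (List.mem_of_getLast? h))

lemma mem_of_headOp_eq_some {l : List (Br × τ)} {s : τ} (h : headOp l = some s) :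
    s ∈ l.map Prod.snd :=
  scan_subset l (List.mem_append_right _ (List.mem_of_mem_head? h))

end Brackets

section Flip

def flipSeg (n : ℕ) (s : Seg) : Seg := (n + 1 - s.2, n + 1 - s.1)

lemma flipMS_eq_map (n : ℕ) (M : MS) : flipMS n M = M.map (flipSeg n) := rfl

lemma flipSeg_flipSeg {n : ℕ} {s : Seg} (h1 : s.1 ≤ n + 1) (h2 : s.2 ≤ n + 1) :
    flipSeg n (flipSeg n s) = s := by
  simp only [flipSeg, Prod.ext_iff]
  omega

lemma flipMS_flipMS {n : ℕ} {M : MS} (hM : IsMS n M) : flipMS n (flipMS n M) = M := by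
  rw [flipMS_eq_map, flipMS_eq_map, Multiset.map_map]
  conv_rhs => rw [← Multiset.map_id M]
  refine Multiset.map_congr rfl fun s hs => ?_
  obtain ⟨-, h, h'⟩ := hM s hs
  exact flipSeg_flipSeg (by omega) (by omega)

/-- `q` need not lie in `MS_n`: `S_i(M)` contains tags such as `[0, i-1]`. -/
lemma count_flipMS_flipSeg {n : ℕ} {M : MS} (hM : IsMS n M) {q : Seg} (h1 : q.1 ≤ n + 1)
    (h2 : q.2 ≤ n + 1) : (flipMS n M).count (flipSeg n q) = M.count q := by
  rw [flipMS_eq_map, Multiset.count_map, Multiset.count, Multiset.countP_eq_card_filter]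
  refine congrArg _ (Multiset.filter_congr fun x hx => ?_)
  obtain ⟨hx1, hx2, hx3⟩ := hM x hx
  simp only [flipSeg, Prod.ext_iff]
  omega

lemma count_flipMS_of_lt {n : ℕ} {M : MS} (hM : IsMS n M) {p : Seg} (hp : n < p.2) :
    (flipMS n M).count p = 0 := by
  refine Multiset.count_eq_zero.mpr fun hp' => ?_
  obtain ⟨x, hx, rfl⟩ := Multiset.mem_map.mp hp'
  have := (hM x hx).1
  exact absurd hp (by dsimp only [flipSeg]; omega)

lemma SiStar_flipMS {n : ℕ} {M : MS} (hM : IsMS n M) {i : ℕ} (hi : 1 ≤ i) (hin : i ≤ n) :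
    SiStar n (flipMS n M) (n + 1 - i) = (Si M i).map (Prod.map id (flipSeg n)) := by
  obtain ⟨k, rfl⟩ := Nat.exists_eq_add_of_le hin
  rw [SiStar, Si, List.range_add, List.flatMap_append, List.map_flatMap]
  refine (congrArg₂ (· ++ ·) (List.flatMap_congr fun t0 ht0 => ?_)
    (List.flatMap_eq_nil_iff.mpr fun t0 ht0 => ?_)).trans (List.append_nil _)
  · have ht : t0 + 1 ≤ i := List.mem_range.mp ht0
    have hop : (i + k + 1 - i, i + k + 1 - i + (t0 + 1) - 1)
        = flipSeg (i + k) (i - (t0 + 1) + 1, i) := by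
      simp only [flipSeg, Prod.mk.injEq, true_and]; omega
    have hcl : (i + k + 1 - i + 1, i + k + 1 - i + (t0 + 1))
        = flipSeg (i + k) (i - (t0 + 1), i - 1) := by
      simp only [flipSeg, Prod.mk.injEq]; omega
    simp only [List.map_append, List.map_replicate, Prod.map, id, hop, hcl]
    rw [count_flipMS_flipSeg hM (by dsimp only; omega) (by dsimp only; omega),
      count_flipMS_flipSeg hM (by dsimp only; omega) (by dsimp only; omega)]
  · obtain ⟨t, -, rfl⟩ := List.mem_map.mp ht0
    have hzero : ∀ a b, i + k < b → (flipMS (i + k) M).count (a, b) = 0 :=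
      fun _ _ h => count_flipMS_of_lt hM h
    dsimp only
    rw [hzero _ _ (by omega), hzero _ _ (by omega)]
    rfl

end Flip

section Operators

variable {n : ℕ} {M : MS} {i : ℕ}

lemma mem_of_mem_map_snd_Si {s : Seg} (h : s ∈ (Si M i).map Prod.snd) : s ∈ M := by
  simp only [Si, List.mem_map, List.mem_flatMap, List.mem_append, List.mem_replicate,
    List.mem_range] at h
  obtain ⟨_, ⟨_, _, (⟨hc, rfl⟩ | ⟨hc, rfl⟩)⟩, rfl⟩ := h <;>
    exact Multiset.count_ne_zero.mp hc

lemma lastCl_SiStar_flipMS (hM : IsMS n M) (hi : 1 ≤ i) (hin : i ≤ n) :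
    lastCl (SiStar n (flipMS n M) (n + 1 - i)) = (lastCl (Si M i)).map (flipSeg n) := by
  rw [SiStar_flipMS hM hi hin, lastCl_map]

lemma headOp_SiStar_flipMS (hM : IsMS n M) (hi : 1 ≤ i) (hin : i ≤ n) :
    headOp (SiStar n (flipMS n M) (n + 1 - i)) = (headOp (Si M i)).map (flipSeg n) := by
  rw [SiStar_flipMS hM hi hin, headOp_map]

lemma flipMS_fM (hM : IsMS n M) (hi : 1 ≤ i) (hin : i ≤ n) :
    flipMS n (fM i M) = fMStar n (n + 1 - i) (flipMS n M) := by
  rw [fM, fMStar, lastCl_SiStar_flipMS hM hi hin]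
  cases h : lastCl (Si M i) with
  | none => simp [flipMS_eq_map, flipSeg]
  | some s =>
    have hs := mem_of_mem_map_snd_Si (mem_of_lastCl_eq_some h)
    simp [flipMS_eq_map, Multiset.map_erase_of_mem _ _ hs, flipSeg]

lemma flipMS_eM (hM : IsMS n M) (hi : 1 ≤ i) (hin : i ≤ n) :
    (eM i M).map (flipMS n) = eMStar n (n + 1 - i) (flipMS n M) := by
  rw [eM, eMStar, headOp_SiStar_flipMS hM hi hin]
  cases h : headOp (Si M i) with
  | none => rfl
  | some s =>
    have hs := mem_of_mem_map_snd_Si (mem_of_headOp_eq_some h)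
    obtain ⟨hs1, hs12, hs2⟩ := hM s hs
    have hcond : n + 1 - s.1 = n + 1 - i ↔ s.1 = i := by omega
    have hpred : n + 1 - (i - 1) = n + 1 - i + 1 := by omega
    by_cases hsi : s.1 = i <;>
      simp [flipMS_eq_map, Multiset.map_erase_of_mem _ _ hs, flipSeg, hsi, hcond, hpred]

end Operators

theorem stmt12 (n : ℕ) (M : MS) (hM : IsMS n M) (i : ℕ) (hi : 1 ≤ i) (hin : i ≤ n) :
    flipMS n (flipMS n M) = M ∧
    flipMS n (fM i M) = fMStar n (n + 1 - i) (flipMS n M) ∧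
    Option.map (flipMS n) (eM i M) = eMStar n (n + 1 - i) (flipMS n M) :=
  ⟨flipMS_flipMS hM, flipMS_fM hM hi hin, flipMS_eM hM hi hin⟩
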